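/- Let n ≥ 3 be an integer, set a = (n−2)/2, let δ be a real number with −a < δ ≤ 0, and let η be a real number with 0 ≤ η ≤ (a² − δ²)/2. Then the function f(t) = (cosh t)^δ satisfies, for every t ∈ ℝ, deriv^[2] f t − a²·f(t) + η·f(t) ≤ (1/2)·(δ² − a²)·f(t). -/

import Mathlib

/-! Since `sinh² = cosh² - 1`, the function `f = cosh ^ δ` satisfies
`f'' = δ² f + δ (1 - δ) cosh ^ (δ - 2)`, and the last term is `≤ 0` when `δ ≤ 0`;
so `f'' ≤ δ² f`, and the bound on `η` finishes the estimate. -/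

open Real

theorem hasDerivAt_cosh_rpow (δ t : ℝ) :
    HasDerivAt (fun s ↦ cosh s ^ δ) (δ * cosh t ^ (δ - 1) * sinh t) t :=
  ((hasDerivAt_cosh t).rpow_const (p := δ) (Or.inl (cosh_pos t).ne')).congr_deriv (by ring)

theorem deriv_cosh_rpow (δ : ℝ) :
    deriv (fun s ↦ cosh s ^ δ) = fun s ↦ δ * cosh s ^ (δ - 1) * sinh s :=
  funext fun s ↦ (hasDerivAt_cosh_rpow δ s).deriv

theorem iterate_deriv_two_cosh_rpow (δ t : ℝ) :
    deriv^[2] (fun s ↦ cosh s ^ δ) t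
      = δ ^ 2 * cosh t ^ δ + δ * (1 - δ) * cosh t ^ (δ - 2) := by
  have hc := cosh_pos t
  have hderiv : HasDerivAt (fun s ↦ δ * cosh s ^ (δ - 1) * sinh s)
      (δ * ((δ - 1) * cosh t ^ (δ - 2) * sinh t) * sinh t
        + δ * cosh t ^ (δ - 1) * cosh t) t :=
    ((((hasDerivAt_cosh t).rpow_const (p := δ - 1)
      (Or.inl hc.ne')).const_mul δ).mul (hasDerivAt_sinh t)).congr_deriv (by ring_nf)
  rw [Function.iterate_succ_apply', Function.iterate_one, deriv_cosh_rpow, hderiv.deriv]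
  have hpow_one : cosh t ^ (δ - 1) * cosh t = cosh t ^ δ := by
    rw [← rpow_add_one hc.ne']; ring_nf
  have hpow_two : cosh t ^ (δ - 2) * cosh t ^ 2 = cosh t ^ δ := by
    rw [← rpow_natCast, ← rpow_add hc]; norm_num
  linear_combination δ * hpow_one + δ * (δ - 1) * cosh t ^ (δ - 2) * sinh_sq t
    + δ * (δ - 1) * hpow_two

theorem iterate_deriv_two_cosh_rpow_le {δ : ℝ} (hδ : δ ≤ 0) (t : ℝ) :
    deriv^[2] (fun s ↦ cosh s ^ δ) t ≤ δ ^ 2 * cosh t ^ δ := by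
  have hcorr : δ * (1 - δ) * cosh t ^ (δ - 2) ≤ 0 :=
    mul_nonpos_of_nonpos_of_nonneg (mul_nonpos_of_nonpos_of_nonneg hδ (by linarith))
      (rpow_nonneg (cosh_pos t).le _)
  linarith [iterate_deriv_two_cosh_rpow δ t]

theorem barrier_cosh_rpow_general
    (a : ℝ)
    (δ : ℝ) (hδ₂ : δ ≤ 0)
    (η : ℝ) (hη₂ : η ≤ (a ^ 2 - δ ^ 2) / 2) (t : ℝ) :
    deriv^[2] (fun s : ℝ => Real.cosh s ^ δ) t - a ^ 2 * Real.cosh t ^ δ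
        + η * Real.cosh t ^ δ
      ≤ (1 / 2) * (δ ^ 2 - a ^ 2) * Real.cosh t ^ δ := by
  have hf : 0 ≤ cosh t ^ δ := rpow_nonneg (cosh_pos t).le δ
  linarith [iterate_deriv_two_cosh_rpow_le hδ₂ t, mul_le_mul_of_nonneg_right hη₂ hf]

/-- Barrier inequality for `(cosh t)^δ` with `−(n−2)/2 < δ ≤ 0`:
it is a supersolution of `∂_t² − a²` perturbed by a zeroth-order term `η`
with `0 ≤ η ≤ (a² − δ²)/2`. -/
theorem barrier_cosh_rpow
    (n : ℕ) (hn : 3 ≤ n) (a : ℝ) (ha : a = ((n : ℝ) - 2) / 2)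
    (δ : ℝ) (hδ₁ : -a < δ) (hδ₂ : δ ≤ 0)
    (η : ℝ) (hη₁ : 0 ≤ η) (hη₂ : η ≤ (a ^ 2 - δ ^ 2) / 2) (t : ℝ) :
    deriv^[2] (fun s : ℝ => Real.cosh s ^ δ) t - a ^ 2 * Real.cosh t ^ δ
        + η * Real.cosh t ^ δ
      ≤ (1 / 2) * (δ ^ 2 - a ^ 2) * Real.cosh t ^ δ :=
  barrier_cosh_rpow_general a δ hδ₂ η hη₂ t
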